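/- arXiv:1504.05374 — 10 statements merged into one kernel-verified Lean document; each statement's English description precedes it below -/
import Mathlib

section
/- Let V be an n-dimensional complex vector space, φ a nilpotent endomorphism of V, and let {w_1,...,w_n} be a basis of V such that φ(w_x) − w_{x+1} ∈ span{w_j : j > x+1} for x < n and φ(w_n) = 0. Then for every d with 0 ≤ d ≤ n, setting F_d = span{w_1,...,w_d}, we have dim φ^{n−d}(F_d) = d. -/
/-!
Write `T m` for the span of the basis vectors `w j` with `j ≥ m`. The hypotheses say that `φ` shifts
the basis one step down modulo lower terms, so `φ (T m) ⊆ T (m + 1)` and, by induction,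
`φ^k (w j) ≡ w (j + k)` modulo `T (j + k + 1)`. Hence `φ^(n-d)` maps `F_d` into `T (n - d)`, and a
downward induction on `m` shows that every `w m` with `m ≥ n - d` is hit modulo `T (m + 1)`. So
`φ^(n-d) (F_d) = T (n - d)`, which has dimension `d`.
-/

theorem Fin.card_subtype_le_val (n k : ℕ) : Fintype.card {j : Fin n // k ≤ j.1} = n - k := by
  have := Finset.card_filter_add_card_filter_not (s := Finset.univ) (fun j : Fin n => j.1 < k)
  simp only [Fin.card_filter_val_lt, not_lt, Finset.card_univ, Fintype.card_fin] at this
  rw [Fintype.card_subtype]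
  omega

namespace Module.Basis

section Ring

variable {R M : Type*} [Ring R] [AddCommGroup M] [Module R M] {n : ℕ} (w : Basis (Fin n) R M)

def tailSpan (m : ℕ) : Submodule R M :=
  Submodule.span R {v | ∃ j : Fin n, m ≤ j.1 ∧ v = w j}

variable {w}

theorem mem_tailSpan_of_le {m : ℕ} {j : Fin n} (h : m ≤ j.1) : w j ∈ w.tailSpan m :=
  Submodule.subset_span ⟨j, h, rfl⟩

theorem tailSpan_le_iff {m : ℕ} {N : Submodule R M} :
    w.tailSpan m ≤ N ↔ ∀ j : Fin n, m ≤ j.1 → w j ∈ N := by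
  simp only [tailSpan, Submodule.span_le, Set.subset_def, Set.mem_ofPred_eq, SetLike.mem_coe]
  exact ⟨fun h j hj => h _ ⟨j, hj, rfl⟩, fun h _ ⟨j, hj, hv⟩ => hv ▸ h j hj⟩

theorem tailSpan_antitone : Antitone w.tailSpan := fun _ _ hm =>
  tailSpan_le_iff.2 fun _ hj => mem_tailSpan_of_le (hm.trans hj)

theorem tailSpan_self : w.tailSpan n = ⊥ :=
  eq_bot_iff.2 <| tailSpan_le_iff.2 fun j hj => absurd j.2 (by omega)

theorem tailSpan_le_of_succ_le {m : ℕ} (hm : m < n) {N : Submodule R M} (hw : w ⟨m, hm⟩ ∈ N)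
    (hN : w.tailSpan (m + 1) ≤ N) : w.tailSpan m ≤ N := by
  refine tailSpan_le_iff.2 fun j hj => ?_
  rcases hj.eq_or_lt with rfl | hlt
  · exact hw
  · exact hN (mem_tailSpan_of_le hlt)

theorem map_tailSpan_le {φ : M →ₗ[R] M} (hφ : ∀ x : Fin n, φ (w x) ∈ w.tailSpan (x.1 + 1))
    (m : ℕ) : (w.tailSpan m).map φ ≤ w.tailSpan (m + 1) := by
  rw [tailSpan, Submodule.map_span_le]
  rintro _ ⟨j, hj, rfl⟩
  exact tailSpan_antitone (by omega) (hφ j)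

section Shift

variable {φ : M →ₗ[R] M}
  (h1 : ∀ x : Fin n, (hx : x.1 + 1 < n) → φ (w x) - w ⟨x.1 + 1, hx⟩ ∈ w.tailSpan (x.1 + 2))

include h1

theorem apply_mem_tailSpan_succ (h2 : ∀ x : Fin n, x.1 + 1 = n → φ (w x) = 0) (x : Fin n) :
    φ (w x) ∈ w.tailSpan (x.1 + 1) := by
  by_cases hx : x.1 + 1 < n
  · rw [← sub_add_cancel (φ (w x)) (w ⟨x.1 + 1, hx⟩)]
    exact Submodule.add_mem _ (tailSpan_antitone (by omega) (h1 x hx)) (mem_tailSpan_of_le le_rfl)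
  · rw [h2 x (by omega)]
    exact zero_mem _

variable (hφ : ∀ x : Fin n, φ (w x) ∈ w.tailSpan (x.1 + 1))

include hφ

theorem pow_apply_sub_mem_tailSpan (k : ℕ) {x y : Fin n} (hxy : x.1 + k = y.1) :
    (φ ^ k) (w x) - w y ∈ w.tailSpan (y.1 + 1) := by
  induction k generalizing y with
  | zero => simp [Fin.ext hxy]
  | succ k ih =>
    have hz : x.1 + k < n := by omega
    have hy : x.1 + k + 1 < n := by omega
    obtain rfl : y = ⟨x.1 + k + 1, hy⟩ := Fin.ext hxy.symm
    have heq : (φ ^ (k + 1)) (w x) - w ⟨x.1 + k + 1, hy⟩ =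
        φ ((φ ^ k) (w x) - w ⟨x.1 + k, hz⟩) + (φ (w ⟨x.1 + k, hz⟩) - w ⟨x.1 + k + 1, hy⟩) := by
      rw [map_sub, pow_succ', Module.End.mul_apply]
      abel
    have hpow : φ ((φ ^ k) (w x) - w ⟨x.1 + k, hz⟩) ∈ w.tailSpan (x.1 + k + 2) :=
      map_tailSpan_le hφ (x.1 + k + 1) (Submodule.mem_map_of_mem (ih (y := ⟨x.1 + k, hz⟩) rfl))
    rw [heq]
    exact Submodule.add_mem _ hpow (h1 ⟨x.1 + k, hz⟩ hy)

theorem map_pow_span_eq_tailSpan {d : ℕ} (hd : d ≤ n) :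
    (Submodule.span R {v | ∃ j : Fin n, j.1 < d ∧ v = w j}).map (φ ^ (n - d)) =
      w.tailSpan (n - d) := by
  set N := (Submodule.span R {v | ∃ j : Fin n, j.1 < d ∧ v = w j}).map (φ ^ (n - d))
  apply le_antisymm
  · rw [Submodule.map_span_le]
    rintro _ ⟨j, hj, rfl⟩
    have hy : j.1 + (n - d) < n := by omega
    have hdiff := pow_apply_sub_mem_tailSpan h1 hφ (n - d) (x := j) (y := ⟨_, hy⟩) rfl
    rw [← sub_add_cancel ((φ ^ (n - d)) (w j)) (w ⟨_, hy⟩)]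
    exact Submodule.add_mem _ (tailSpan_antitone (by simp; omega) hdiff)
      (mem_tailSpan_of_le (by simp))
  · suffices ∀ m (hm : m ≤ n), n - d ≤ m → w.tailSpan m ≤ N from this _ (Nat.sub_le n d) le_rfl
    intro m hm
    induction hm using Nat.decreasingInduction with
    | self => simp [tailSpan_self]
    | of_succ m hmn ih =>
      intro hdm
      have hTN := ih (by omega)
      let j : Fin n := ⟨m - (n - d), by omega⟩
      have hj : (φ ^ (n - d)) (w j) ∈ N :=
        Submodule.mem_map_of_mem (Submodule.subset_span ⟨j, by simp [j]; omega, rfl⟩)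
      have hdiff := pow_apply_sub_mem_tailSpan h1 hφ (n - d) (x := j) (y := ⟨m, hmn⟩)
        (by simp [j]; omega)
      refine tailSpan_le_of_succ_le hmn ?_ hTN
      rw [← sub_sub_cancel ((φ ^ (n - d)) (w j)) (w ⟨m, hmn⟩)]
      exact Submodule.sub_mem _ hj (hTN hdiff)

end Shift

end Ring

theorem finrank_tailSpan {K V : Type*} [DivisionRing K] [AddCommGroup V] [Module K V] {n : ℕ}
    (w : Basis (Fin n) K V) (m : ℕ) : Module.finrank K (w.tailSpan m) = n - m := by
  have hrange : w.tailSpan m =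
      Submodule.span K (Set.range (w ∘ Subtype.val : {j : Fin n // m ≤ j.1} → V)) := by
    refine congrArg (Submodule.span K) (Set.ext fun v => ?_)
    exact ⟨fun ⟨j, hj, hv⟩ => ⟨⟨j, hj⟩, hv.symm⟩, fun ⟨⟨j, hj⟩, hv⟩ => ⟨j, hj, hv.symm⟩⟩
  rw [hrange, finrank_span_eq_card (w.linearIndependent.comp _ Subtype.val_injective),
    Fin.card_subtype_le_val]

end Module.Basis

theorem stmt_1_general (n : ℕ) {V : Type*} [AddCommGroup V] [Module ℂ V]
    (φ : V →ₗ[ℂ] V) (w : Module.Basis (Fin n) ℂ V)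
    (h1 : ∀ x : Fin n, (hx : x.1 + 1 < n) →
      φ (w x) - w ⟨x.1 + 1, hx⟩ ∈
        Submodule.span ℂ {v : V | ∃ j : Fin n, x.1 + 1 < j.1 ∧ v = w j})
    (h2 : ∀ x : Fin n, x.1 + 1 = n → φ (w x) = 0) :
    ∀ d : ℕ, d ≤ n →
      Module.finrank ℂ
        (Submodule.map (φ ^ (n - d))
          (Submodule.span ℂ {v : V | ∃ j : Fin n, j.1 < d ∧ v = w j})) = d := by
  intro d hd
  rw [Module.Basis.map_pow_span_eq_tailSpan h1 (Module.Basis.apply_mem_tailSpan_succ h1 h2) hd,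
    Module.Basis.finrank_tailSpan]
  omega

/-- dimension of the image of the partial flag under powers of φ. -/
theorem stmt_1 (n : ℕ) {V : Type*} [AddCommGroup V] [Module ℂ V]
    (φ : V →ₗ[ℂ] V) (hnil : IsNilpotent φ) (w : Module.Basis (Fin n) ℂ V)
    (h1 : ∀ x : Fin n, (hx : x.1 + 1 < n) →
      φ (w x) - w ⟨x.1 + 1, hx⟩ ∈
        Submodule.span ℂ {v : V | ∃ j : Fin n, x.1 + 1 < j.1 ∧ v = w j})
    (h2 : ∀ x : Fin n, x.1 + 1 = n → φ (w x) = 0) :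
    ∀ d : ℕ, d ≤ n →
      Module.finrank ℂ
        (Submodule.map (φ ^ (n - d))
          (Submodule.span ℂ {v : V | ∃ j : Fin n, j.1 < d ∧ v = w j})) = d :=
  stmt_1_general n φ w h1 h2
end

section
/- Let N be an n×n nilpotent complex matrix such that for every k with 1 ≤ k ≤ n−1 the first k columns of N^{n−k} are linearly independent. Then there exist a nilpotent endomorphism basis w_1,...,w_n of ℂ^n adapted to the full flag (i.e. span{w_1,...,w_k} = span{e_1,...,e_k} for all k) such that N·w_x − w_{x+1} ∈ span{w_j : j > x+1} for x < n and N·w_n = 0. -/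
/-!
Write `f` for the nilpotent map and `F k` for the flag. Since `range f^k ≤ ker f^(n-k)`, the
hypothesis makes `F k` disjoint from `range f^k`; applied to `F (n-k)` it also gives
`dim ker f^k ≤ k`, so `F k ⊕ range f^k = V` for every `k ≤ n`. For `k = 1` this yields a vector `v`
with `K v ⊕ range f = V`, hence `range f^m = K f^m v + range f^(m+1)`.

Let `w x` be the component of `f^x v` in `F (x+1)` along `range f^(x+1)`. As `w x ≡ f^x v`
modulo `range f^(x+1)`, the `w j` with `j ≥ m` span `range f^m`; for `m = 0` this makes `w` a
basis, adapted to `F` by a dimension count. Finally `f (w x) ≡ f^(x+1) v ≡ w (x+1)` modulo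
`range f^(x+2)`.
-/

open Module Submodule LinearMap

lemma setOf_exists_and_eq_eq_image {α ι : Type*} (b : ι → α) (p : ι → Prop) :
    {v | ∃ j, p j ∧ v = b j} = b '' {j | p j} := by
  ext
  simp [eq_comm]

variable {K V : Type*} [Field K] [AddCommGroup V] [Module K V]

lemma IsNilpotent.pow_finrank_eq_zero [FiniteDimensional K V] {f : End K V}
    (hf : IsNilpotent f) : f ^ finrank K V = 0 := by
  simpa [hf.charpoly_eq_X_pow_finrank] using f.aeval_self_charpoly

lemma finrank_span_image_val_lt {n : ℕ} {b : Fin n → V} (hb : LinearIndependent K b) {k : ℕ}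
    (hk : k ≤ n) : finrank K (span K (b '' {j | j.1 < k})) = k := by
  rw [← Fin.range_castLE hk, ← Set.range_comp,
    finrank_span_eq_card (hb.comp _ (Fin.castLE_injective hk)), Fintype.card_fin]

lemma Matrix.disjoint_span_basisFun_ker_toLin' {n : ℕ} (M : Matrix (Fin n) (Fin n) K) {k : ℕ}
    (hk : k ≤ n) (hM : LinearIndependent K fun j : Fin k => fun i => M i (Fin.castLE hk j)) :
    Disjoint (span K (Pi.basisFun K (Fin n) '' {j | j.1 < k})) (ker (Matrix.toLin' M)) := by
  have hcol : Matrix.toLin' M ∘ Pi.basisFun K (Fin n) ∘ Fin.castLE hk =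
      fun j i => M i (Fin.castLE hk j) := by
    funext j i
    simp
  have := Submodule.range_ker_disjoint (hcol ▸ hM)
  rwa [Set.range_comp, Fin.range_castLE] at this

section AdaptedBasis

variable {f : End K V}

lemma apply_mem_range_pow_succ {m : ℕ} {y : V} (hy : y ∈ range (f ^ m)) :
    f y ∈ range (f ^ (m + 1)) := by
  obtain ⟨z, rfl⟩ := hy
  exact ⟨z, by rw [pow_succ', Module.End.mul_apply]⟩

lemma range_pow_eq_span_sup_range_pow_succ {v : V} (hv : span K {v} ⊔ range f = ⊤) (m : ℕ) :
    range (f ^ m) = span K {(f ^ m) v} ⊔ range (f ^ (m + 1)) := by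
  rw [range_eq_map, ← hv, Submodule.map_sup, Submodule.map_span, Set.image_singleton,
    ← range_comp, pow_succ, Module.End.mul_eq_comp]

lemma range_pow_le_span_image {n : ℕ} {v : V} {w : Fin n → V} (hf : f ^ n = 0)
    (hv : span K {v} ⊔ range f = ⊤)
    (hwv : ∀ x : Fin n, (f ^ x.1) v - w x ∈ range (f ^ (x.1 + 1))) (m : ℕ) :
    range (f ^ m) ≤ span K (w '' {j | m ≤ j.1}) := by
  induction hd : n - m generalizing m with
  | zero =>
    rw [pow_eq_zero_of_le (by omega) hf, range_zero]
    exact bot_le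
  | succ d ih =>
    have hm : m < n := by omega
    have hnext : range (f ^ (m + 1)) ≤ span K (w '' {j | m ≤ j.1}) :=
      (ih (m + 1) (by omega)).trans (span_mono (Set.image_mono fun j (hj : m + 1 ≤ j.1) =>
        show m ≤ j.1 by omega))
    rw [range_pow_eq_span_sup_range_pow_succ hv m, sup_le_iff, span_le, Set.singleton_subset_iff]
    refine ⟨?_, hnext⟩
    rw [SetLike.mem_coe, ← sub_add_cancel ((f ^ m) v) (w ⟨m, hm⟩)]
    exact add_mem (hnext (hwv ⟨m, hm⟩)) (subset_span (Set.mem_image_of_mem w (le_refl m)))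

variable [FiniteDimensional K V] {F : ℕ → Submodule K V} {n : ℕ}

lemma isCompl_flag_range_pow (hn : finrank K V = n) (hF : ∀ k ≤ n, finrank K (F k) = k)
    (hf : f ^ n = 0) (hdisj : ∀ k ≤ n, Disjoint (F k) (ker (f ^ (n - k)))) {k : ℕ}
    (hk : k ≤ n) : IsCompl (F k) (range (f ^ k)) := by
  have hrange : range (f ^ k) ≤ ker (f ^ (n - k)) := by
    rw [range_le_ker_iff, ← Module.End.mul_eq_comp, ← pow_add, Nat.sub_add_cancel hk, hf]
  have hker : finrank K (ker (f ^ k)) ≤ k := by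
    have := finrank_add_finrank_le_of_disjoint (hdisj (n - k) (Nat.sub_le n k))
    rw [Nat.sub_sub_self hk, hF _ (Nat.sub_le n k)] at this
    omega
  have := finrank_range_add_finrank_ker (f ^ k)
  rw [isCompl_iff_disjoint _ _ (by rw [hF k hk]; omega)]
  exact (hdisj k hk).mono_right hrange

lemma exists_span_singleton_sup_range_eq_top (hn : finrank K V = n)
    (hF : ∀ k ≤ n, finrank K (F k) = k) (hf : f ^ n = 0)
    (hdisj : ∀ k ≤ n, Disjoint (F k) (ker (f ^ (n - k)))) :
    ∃ v : V, span K {v} ⊔ range f = ⊤ := by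
  rcases Nat.eq_zero_or_pos n with rfl | hn0
  · refine ⟨0, eq_top_of_finrank_eq ?_⟩
    have := Submodule.finrank_le (span K {0} ⊔ range f)
    omega
  · obtain ⟨v, hv⟩ := ((finrank_le_one_iff_isPrincipal (F 1)).1 (hF 1 hn0).le).principal
    refine ⟨v, ?_⟩
    rw [← hv, ← pow_one f]
    exact (isCompl_flag_range_pow hn hF hf hdisj hn0).sup_eq_top

theorem exists_adapted_basis_of_disjoint_ker_pow (hn : finrank K V = n) (hFmono : Monotone F)
    (hF : ∀ k ≤ n, finrank K (F k) = k) (hf : f ^ n = 0)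
    (hdisj : ∀ k ≤ n, Disjoint (F k) (ker (f ^ (n - k)))) :
    ∃ w : Basis (Fin n) K V, (∀ k ≤ n, span K (w '' {j | j.1 < k}) = F k) ∧
      (∀ x (hx : x.1 + 1 < n), f (w x) - w ⟨x.1 + 1, hx⟩ ∈ span K (w '' {j | x.1 + 1 < j.1})) ∧
      ∀ x : Fin n, x.1 + 1 = n → f (w x) = 0 := by
  obtain ⟨v, hv⟩ := exists_span_singleton_sup_range_eq_top hn hF hf hdisj
  have hdecomp (x : Fin n) : ∃ y ∈ F (x.1 + 1), (f ^ x.1) v - y ∈ range (f ^ (x.1 + 1)) := by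
    obtain ⟨y, z, hy, hz, hyz⟩ := codisjoint_iff_exists_add_eq.1
      (isCompl_flag_range_pow hn hF hf hdisj x.2).codisjoint ((f ^ x.1) v)
    exact ⟨y, hy, by rwa [← hyz, add_sub_cancel_left]⟩
  choose w hwF hwv using hdecomp
  have hspan := range_pow_le_span_image hf hv hwv
  have htop : ⊤ ≤ span K (Set.range w) := by
    simpa [Module.End.one_eq_id, range_id] using hspan 0
  have hw : LinearIndependent K w :=
    linearIndependent_of_top_le_span_of_card_eq_finrank htop (by simp [hn])
  have hshift (x : Fin n) : f (w x) - (f ^ (x.1 + 1)) v ∈ range (f ^ (x.1 + 2)) := by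
    have : f (w x) - (f ^ (x.1 + 1)) v = -f ((f ^ x.1) v - w x) := by
      rw [map_sub, pow_succ', Module.End.mul_apply]
      abel
    rw [this]
    exact neg_mem (apply_mem_range_pow_succ (hwv x))
  refine ⟨Basis.mk hw htop, fun k hk => ?_, fun x hx => ?_, fun x hx => ?_⟩
  · rw [Basis.coe_mk]
    refine eq_of_le_of_finrank_eq (span_le.2 ?_) (by rw [finrank_span_image_val_lt hw hk, hF k hk])
    rintro _ ⟨j, hj, rfl⟩
    exact hFmono (show j.1 + 1 ≤ k from hj) (hwF j)
  · rw [Basis.coe_mk, ← sub_add_sub_cancel _ ((f ^ (x.1 + 1)) v)]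
    exact hspan (x.1 + 2) (add_mem (hshift x) (hwv ⟨x.1 + 1, hx⟩))
  · have h0 : f (w x) - (f ^ (x.1 + 1)) v = 0 := by
      simpa [pow_eq_zero_of_le (show n ≤ x.1 + 2 by omega) hf] using hshift x
    rwa [hx, hf, LinearMap.zero_apply, sub_zero, ← Basis.coe_mk hw htop] at h0

end AdaptedBasis

/-- existence of an adapted triangular basis for a generic nilpotent matrix. -/
theorem stmt_3 (n : ℕ) (N : Matrix (Fin n) (Fin n) ℂ) (hN : IsNilpotent N)
    (hgen : ∀ k : ℕ, (hk1 : 1 ≤ k) → (hk2 : k ≤ n - 1) →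
      LinearIndependent ℂ
        (fun j : Fin k => fun i : Fin n =>
          (N ^ (n - k)) i ⟨j.1, by have := j.isLt; omega⟩)) :
    ∃ w : Module.Basis (Fin n) ℂ (Fin n → ℂ),
      (∀ k : ℕ, k ≤ n →
        Submodule.span ℂ {v : Fin n → ℂ | ∃ j : Fin n, j.1 < k ∧ v = w j} =
        Submodule.span ℂ {v : Fin n → ℂ | ∃ j : Fin n, j.1 < k ∧ v = Pi.single j 1}) ∧
      (∀ x : Fin n, (hx : x.1 + 1 < n) →
        N.mulVec (w x) - w ⟨x.1 + 1, hx⟩ ∈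
          Submodule.span ℂ {v : Fin n → ℂ | ∃ j : Fin n, x.1 + 1 < j.1 ∧ v = w j}) ∧
      (∀ x : Fin n, x.1 + 1 = n → N.mulVec (w x) = 0) := by
  set e := Pi.basisFun ℂ (Fin n)
  set F : ℕ → Submodule ℂ (Fin n → ℂ) := fun k => span ℂ (e '' {j | j.1 < k})
  have hFmono : Monotone F := fun k l hkl =>
    span_mono (Set.image_mono fun j (hj : j.1 < k) => show j.1 < l by omega)
  have hdisj (k : ℕ) (hk : k ≤ n) : Disjoint (F k) (ker (Matrix.toLin' N ^ (n - k))) := by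
    rw [← Matrix.toLin'_pow]
    rcases Nat.eq_zero_or_pos k with rfl | hk0
    · simp [F]
    rcases hk.eq_or_lt with rfl | hkn
    · simp
    exact Matrix.disjoint_span_basisFun_ker_toLin' _ hk (hgen k hk0 (by omega))
  have hnil : IsNilpotent (Matrix.toLin' N) := by
    obtain ⟨m, hm⟩ := hN
    exact ⟨m, by rw [← Matrix.toLin'_pow, hm, map_zero]⟩
  obtain ⟨w, hadapted, hshift, hlast⟩ := exists_adapted_basis_of_disjoint_ker_pow (by simp)
    hFmono (fun k hk => finrank_span_image_val_lt e.linearIndependent hk)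
    (by simpa using hnil.pow_finrank_eq_zero) hdisj
  refine ⟨w, fun k hk => ?_, fun x hx => ?_, fun x hx => ?_⟩ <;>
    simp only [← Pi.basisFun_apply ℂ, setOf_exists_and_eq_eq_image, ← Matrix.toLin'_apply]
  exacts [hadapted k hk, hshift x hx, hlast x hx]
end

section
/- Let B ⊂ GL_n(ℂ) be the group of invertible upper triangular matrices acting on nilpotent matrices by conjugation. Let H and H' be two n×n complex matrices with H_{i,j} = H'_{i,j} = 0 for i ≤ j and H_{i+1,i} = H'_{i+1,i} = 1 for all i. If H and H' are B-conjugate (i.e. there exists b ∈ B with bHb^{-1} = H'), then H = H'. -/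
/-- two Borel-conjugate matrices in B-normal form are equal. -/
theorem stmt_4 (n : ℕ) (H H' b : Matrix (Fin n) (Fin n) ℂ)
    (hH0 : ∀ i j : Fin n, i ≤ j → H i j = 0)
    (hH1 : ∀ i : Fin n, (h : i.1 + 1 < n) → H ⟨i.1 + 1, h⟩ i = 1)
    (hH'0 : ∀ i j : Fin n, i ≤ j → H' i j = 0)
    (hH'1 : ∀ i : Fin n, (h : i.1 + 1 < n) → H' ⟨i.1 + 1, h⟩ i = 1)
    (hb : IsUnit b.det) (hbu : ∀ i j : Fin n, j < i → b i j = 0)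
    (hconj : b * H * b⁻¹ = H') :
    H = H' := by
  have hbH : b * H = H' * b := by
    have h1 : b * H * b⁻¹ * b = H' * b := by rw [hconj]
    rwa [Matrix.mul_assoc (b * H), Matrix.nonsing_inv_mul b hb, Matrix.mul_one] at h1
  have hEq : ∀ i j : Fin n, ∑ k, b i k * H k j = ∑ k, H' i k * b k j := by
    intro i j
    have := congrFun (congrFun hbH i) j
    simpa [Matrix.mul_apply] using this
  have hmul : ∀ x y : ℕ, x < y → n * x + n ≤ n * y := by
    intro x y h
    have h2 : n * (x + 1) ≤ n * y := Nat.mul_le_mul_left n h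
    rw [Nat.mul_add, Nat.mul_one] at h2
    exact h2
  -- all strictly upper-triangular entries of b vanish
  have hupper : ∀ N : ℕ, ∀ i j : Fin n, i < j →
      (i : ℕ) + n * (n - ((j : ℕ) - (i : ℕ))) ≤ N → b i j = 0 := by
    intro N
    induction N using Nat.strong_induction_on with
    | _ N IH =>
      intro i j hij hN
      have npos : 0 < n := j.pos
      have hij' : (i : ℕ) < (j : ℕ) := hij
      have hjn : (j : ℕ) < n := j.isLt
      have hj1 : (j : ℕ) - 1 < n := by omega
      set j' : Fin n := ⟨(j : ℕ) - 1, hj1⟩ with hj'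
      have heq := hEq i j'
      have hL : ∑ k, b i k * H k j' = b i j := by
        rw [Finset.sum_eq_single j]
        · have hone : H j j' = 1 := by
            have h2 : (j' : ℕ) + 1 < n := by simp only [hj']; omega
            have h3 := hH1 j' h2
            have h4 : (⟨(j' : ℕ) + 1, h2⟩ : Fin n) = j := by
              apply Fin.ext; simp only [hj']; omega
            rwa [h4] at h3
          rw [hone, mul_one]
        · intro k _ hk
          by_cases hkj : (k : ℕ) ≤ (j' : ℕ)
          · rw [hH0 k j' hkj, mul_zero]
          · have hk1 : (j : ℕ) + 1 ≤ (k : ℕ) := by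
              have hne : (k : ℕ) ≠ (j : ℕ) := fun h => hk (Fin.ext h)
              simp only [hj'] at hkj; omega
            have hz : b i k = 0 := by
              apply IH ((i : ℕ) + n * (n - ((k : ℕ) - (i : ℕ)))) ?_ i k
                (by exact (by omega : (i:ℕ) < (k:ℕ))) le_rfl
              have hkn : (k : ℕ) < n := k.isLt
              have := hmul (n - ((k : ℕ) - (i : ℕ))) (n - ((j : ℕ) - (i : ℕ))) (by omega)
              omega
            rw [hz, zero_mul]
        · intro h; exact absurd (Finset.mem_univ j) h
      have hR : ∑ k, H' i k * b k j' = 0 := by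
        apply Finset.sum_eq_zero
        intro k _
        by_cases hki : (i : ℕ) ≤ (k : ℕ)
        · rw [hH'0 i k hki, zero_mul]
        · push_neg at hki
          have hkj' : (k : ℕ) < (j' : ℕ) := by simp only [hj']; omega
          have hz : b k j' = 0 := by
            apply IH ((k : ℕ) + n * (n - ((j' : ℕ) - (k : ℕ)))) ?_ k j' hkj' le_rfl
            simp only [hj']
            rcases Nat.lt_or_ge ((j : ℕ) - (i : ℕ)) ((j : ℕ) - 1 - (k : ℕ)) with hlt | hge
            · have hkn : (k : ℕ) < n := k.isLt
              have := hmul (n - ((j : ℕ) - 1 - (k : ℕ))) (n - ((j : ℕ) - (i : ℕ))) (by omega)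
              omega
            · have hdeg : (j : ℕ) - 1 - (k : ℕ) = (j : ℕ) - (i : ℕ) := by omega
              rw [hdeg]; omega
          rw [hz, mul_zero]
      rw [hL, hR] at heq
      exact heq
  have hoff : ∀ i j : Fin n, i ≠ j → b i j = 0 := by
    intro i j hij
    rcases lt_trichotomy i j with h | h | h
    · exact hupper _ i j h le_rfl
    · exact absurd h hij
    · exact hbu i j h
  -- consecutive diagonal entries agree
  have hstep : ∀ (j : Fin n) (h : (j : ℕ) + 1 < n),
      b ⟨(j : ℕ) + 1, h⟩ ⟨(j : ℕ) + 1, h⟩ = b j j := by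
    intro j h
    set i : Fin n := ⟨(j : ℕ) + 1, h⟩ with hi
    have heq := hEq i j
    have hL : ∑ k, b i k * H k j = b i i := by
      rw [Finset.sum_eq_single i]
      · rw [hH1 j h, mul_one]
      · intro k _ hk
        rw [hoff i k (fun hh => hk hh.symm), zero_mul]
      · intro hh; exact absurd (Finset.mem_univ i) hh
    have hR : ∑ k, H' i k * b k j = b j j := by
      rw [Finset.sum_eq_single j]
      · rw [hH'1 j h, one_mul]
      · intro k _ hk
        rw [hoff k j hk, mul_zero]
      · intro hh; exact absurd (Finset.mem_univ j) hh
    rw [hL, hR] at heq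
    exact heq
  -- all diagonal entries agree
  have hconst : ∀ i j : Fin n, b i i = b j j := by
    have aux : ∀ m : ℕ, ∀ h : m < n,
        b ⟨m, h⟩ ⟨m, h⟩ = b ⟨0, Nat.lt_of_le_of_lt (Nat.zero_le m) h⟩
          ⟨0, Nat.lt_of_le_of_lt (Nat.zero_le m) h⟩ := by
      intro m
      induction m with
      | zero => intro h; rfl
      | succ m ih =>
        intro h
        have hm : m < n := by omega
        have h2 := hstep ⟨m, hm⟩ h
        simp only [] at h2
        rw [h2, ih hm]
    intro i j
    have h1 := aux (i : ℕ) i.isLt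
    have h2 := aux (j : ℕ) j.isLt
    simp only [Fin.eta] at h1 h2
    rw [h1, h2]
  -- diagonal entries are nonzero
  have hdet : b.det = ∏ i, b i i :=
    Matrix.det_of_upperTriangular (fun i j h => hbu i j h)
  have hne : ∀ i : Fin n, b i i ≠ 0 := by
    intro i
    rw [hdet] at hb
    exact (isUnit_of_dvd_unit (Finset.dvd_prod_of_mem _ (Finset.mem_univ i)) hb).ne_zero
  ext i j
  have heq := hEq i j
  have hL : ∑ k, b i k * H k j = b j j * H i j := by
    rw [Finset.sum_eq_single i]
    · rw [hconst i j]
    · intro k _ hk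
      rw [hoff i k (fun hh => hk hh.symm), zero_mul]
    · intro hh; exact absurd (Finset.mem_univ i) hh
  have hR : ∑ k, H' i k * b k j = H' i j * b j j := by
    rw [Finset.sum_eq_single j]
    · intro k _ hk
      rw [hoff k j hk, mul_zero]
    · intro hh; exact absurd (Finset.mem_univ j) hh
  rw [hL, hR] at heq
  rw [mul_comm] at heq
  exact mul_right_cancel₀ (hne j) heq
end

section
/- Let U ⊂ GL_n(ℂ) be the group of upper triangular unipotent matrices acting on nilpotent matrices by conjugation. Every matrix H with H_{i,j} = 0 for i ≤ j and H_{i+1,i} ≠ 0 for all i is nilpotent, and if H, H' are two such matrices that are U-conjugate then H = H'. -/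
/-- Powers of a strictly lower triangular matrix shift the triangularity. -/
lemma strictLower_pow_entry {n : ℕ} (H : Matrix (Fin n) (Fin n) ℂ)
    (hH0 : ∀ i j : Fin n, i ≤ j → H i j = 0) :
    ∀ k : ℕ, ∀ i j : Fin n, (H ^ k) i j ≠ 0 → j.1 + k ≤ i.1 := by
  intro k
  induction k with
  | zero =>
    intro i j h
    simp only [pow_zero] at h
    have hij : i = j := by
      by_contra hij
      exact h (by simp [Matrix.one_apply, hij])
    subst hij
    omega
  | succ k IH =>
    intro i j h
    rw [pow_succ, Matrix.mul_apply] at h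
    obtain ⟨l, -, hl⟩ := Finset.exists_ne_zero_of_sum_ne_zero h
    have h1 : (H ^ k) i l ≠ 0 := fun hc => hl (by simp [hc])
    have h2 : H l j ≠ 0 := fun hc => hl (by simp [hc])
    have hlk := IH i l h1
    have hjl : j < l := by
      by_contra hc
      exact h2 (hH0 l j (not_lt.1 hc))
    have : j.1 < l.1 := hjl
    omega


/-- One step of the row induction: if all earlier rows of `u` are standard basis
vectors and earlier rows of `H` and `H'` agree, the same holds for row `i`. -/
lemma main_step (n : ℕ) (H H' u : Matrix (Fin n) (Fin n) ℂ)
    (hH0 : ∀ i j : Fin n, i ≤ j → H i j = 0)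
    (hH1 : ∀ i : Fin n, (h : i.1 + 1 < n) → H ⟨i.1 + 1, h⟩ i ≠ 0)
    (hH'0 : ∀ i j : Fin n, i ≤ j → H' i j = 0)
    (hH'1 : ∀ i : Fin n, (h : i.1 + 1 < n) → H' ⟨i.1 + 1, h⟩ i ≠ 0)
    (hu1 : ∀ i : Fin n, u i i = 1)
    (hu0 : ∀ i j : Fin n, j < i → u i j = 0)
    (heq : ∀ i j : Fin n, ∑ k, u i k * H k j = ∑ k, H' i k * u k j)
    (i : Fin n)
    (IH : ∀ i' : Fin n, i' < i →
      (∀ k : Fin n, i' < k → u i' k = 0) ∧ (∀ j : Fin n, H i' j = H' i' j)) :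
    (∀ k : Fin n, i < k → u i k = 0) ∧ (∀ j : Fin n, H i j = H' i j) := by
  -- Step 1: row i of u vanishes above the diagonal, by downward induction.
  have step1 : ∀ m : ℕ, ∀ k : Fin n, n - k.1 ≤ m → i < k → u i k = 0 := by
    intro m
    induction m with
    | zero =>
      intro k hk _
      exact absurd hk (by have := k.2; omega)
    | succ m IHm =>
      intro k hk hik
      have hik' : i.1 < k.1 := hik
      have hk2 := k.2
      obtain ⟨j, hjk⟩ : ∃ j : Fin n, j.1 + 1 = k.1 :=
        ⟨⟨k.1 - 1, by omega⟩, by simp; omega⟩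
      have E := heq i j
      have hR : ∑ k', H' i k' * u k' j = 0 := by
        apply Finset.sum_eq_zero
        intro k' _
        by_cases h : i ≤ k'
        · rw [hH'0 i k' h, zero_mul]
        · push_neg at h
          have hk'i : k'.1 < i.1 := h
          have : u k' j = 0 := (IH k' h).1 j (by
            show k'.1 < j.1
            omega)
          rw [this, mul_zero]
      have hL : ∑ k', u i k' * H k' j = u i k * H k j := by
        apply Finset.sum_eq_single_of_mem k (Finset.mem_univ k)
        intro k' _ hne
        by_cases h : k' ≤ j
        · rw [hH0 k' j h, mul_zero]
        · push_neg at h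
          have hjk' : j.1 < k'.1 := h
          have hkk' : k.1 < k'.1 := by
            have : k'.1 ≠ k.1 := Fin.val_ne_of_ne hne
            omega
          have : u i k' = 0 := IHm k' (by omega) (by
            show i.1 < k'.1; omega)
          rw [this, zero_mul]
      rw [hL, hR] at E
      have hHkj : H k j ≠ 0 := by
        have hlt : j.1 + 1 < n := by omega
        have hke : k = ⟨j.1 + 1, hlt⟩ := Fin.ext hjk.symm
        rw [hke]
        exact hH1 j hlt
      exact (mul_eq_zero.1 E).resolve_right hHkj
  have hrow : ∀ k : Fin n, i < k → u i k = 0 := fun k hk =>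
    step1 n k (by omega) hk
  refine ⟨hrow, ?_⟩
  -- Step 2: row i of H and H' agree.
  intro j
  by_cases hij : i ≤ j
  · rw [hH0 i j hij, hH'0 i j hij]
  · push_neg at hij
    have hji : j.1 < i.1 := hij
    have E := heq i j
    have hL : ∑ k, u i k * H k j = H i j := by
      rw [Finset.sum_eq_single_of_mem i (Finset.mem_univ i)]
      · rw [hu1 i, one_mul]
      · intro k _ hne
        rcases lt_or_gt_of_ne hne with h | h
        · rw [hu0 i k h, zero_mul]
        · rw [hrow k h, zero_mul]
    have hR : ∑ k, H' i k * u k j = H' i j := by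
      rw [Finset.sum_eq_single_of_mem j (Finset.mem_univ j)]
      · rw [hu1 j, mul_one]
      · intro k _ hne
        by_cases h : i ≤ k
        · rw [hH'0 i k h, zero_mul]
        · push_neg at h
          rcases lt_or_gt_of_ne hne with h2 | h2
          · rw [(IH k h).1 j h2, mul_zero]
          · rw [hu0 k j h2, mul_zero]
    rw [hL, hR] at E
    exact E

/-- matrices in U-normal form are nilpotent, and two U-conjugate
U-normal forms are equal. -/
theorem stmt_5 (n : ℕ) :
    (∀ H : Matrix (Fin n) (Fin n) ℂ,
      (∀ i j : Fin n, i ≤ j → H i j = 0) →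
      (∀ i : Fin n, (h : i.1 + 1 < n) → H ⟨i.1 + 1, h⟩ i ≠ 0) →
      IsNilpotent H) ∧
    (∀ H H' u : Matrix (Fin n) (Fin n) ℂ,
      (∀ i j : Fin n, i ≤ j → H i j = 0) →
      (∀ i : Fin n, (h : i.1 + 1 < n) → H ⟨i.1 + 1, h⟩ i ≠ 0) →
      (∀ i j : Fin n, i ≤ j → H' i j = 0) →
      (∀ i : Fin n, (h : i.1 + 1 < n) → H' ⟨i.1 + 1, h⟩ i ≠ 0) →
      (∀ i : Fin n, u i i = 1) →
      (∀ i j : Fin n, j < i → u i j = 0) →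
      u * H * u⁻¹ = H' → H = H') := by
  constructor
  · -- nilpotency
    intro H hH0 _
    refine ⟨n, ?_⟩
    ext i j
    by_contra hc
    have := strictLower_pow_entry H hH0 n i j (by simpa using hc)
    have := i.2
    omega
  · -- uniqueness
    intro H H' u hH0 hH1 hH'0 hH'1 hu1 hu0 hconj
    -- u is invertible: det u = 1
    have hdet : u.det = 1 := by
      have htri : u.BlockTriangular id := fun i j h => hu0 i j h
      rw [Matrix.det_of_upperTriangular htri]
      simp [hu1]
    have hUnit : IsUnit u.det := by rw [hdet]; exact isUnit_one
    have hEq : u * H = H' * u := by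
      have := congrArg (· * u) hconj
      simpa [Matrix.mul_assoc, Matrix.nonsing_inv_mul u hUnit] using this
    have heq : ∀ i j : Fin n, ∑ k, u i k * H k j = ∑ k, H' i k * u k j := by
      intro i j
      have := congrFun (congrFun hEq i) j
      simpa [Matrix.mul_apply] using this
    -- main induction on rows
    have key : ∀ N : ℕ, ∀ i : Fin n, i.1 ≤ N →
        (∀ k : Fin n, i < k → u i k = 0) ∧ (∀ j : Fin n, H i j = H' i j) := by
      intro N
      induction N with
      | zero =>
        intro i hi
        have IH : ∀ i' : Fin n, i' < i →
            (∀ k : Fin n, i' < k → u i' k = 0) ∧ (∀ j : Fin n, H i' j = H' i' j) := by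
          intro i' hi'
          exact absurd (show i'.1 < 0 by omega) (by omega)
        exact main_step n H H' u hH0 hH1 hH'0 hH'1 hu1 hu0 heq i IH
      | succ N IHN =>
        intro i hi
        have IH : ∀ i' : Fin n, i' < i →
            (∀ k : Fin n, i' < k → u i' k = 0) ∧ (∀ j : Fin n, H i' j = H' i' j) := by
          intro i' hi'
          exact IHN i' (by have : i'.1 < i.1 := hi'; omega)
        exact main_step n H H' u hH0 hH1 hH'0 hH'1 hu1 hu0 heq i IH
    ext i j
    exact (key i.1 i le_rfl).2 j
end

section
/- Fix positive integers a_1,...,a_s and a'_1,...,a'_t with a_1+...+a_s = a'_1+...+a'_t = r, and polynomials P_{i,j} ∈ ℂ[x] for 1 ≤ i ≤ s, 1 ≤ j ≤ t. For an n×n nilpotent complex matrix N, let N^P be the r×r block matrix whose (i,j) block is the submatrix of P_{i,j}(N) formed by its last a_i rows and first a'_j columns. Then the function f(N) = det(N^P) satisfies: for every invertible upper triangular matrix g, f(gNg^{-1}) = χ(g)·f(N), where χ(g) = ∏_{i=1}^{s}(g_{n−a_i+1,n−a_i+1}···g_{n,n}) · ∏_{j=1}^{t}(g_{1,1}···g_{a'_j,a'_j})^{-1}.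 -/
open Matrix Polynomial Finset

lemma aux_aeval_conj {n : ℕ} (g N : Matrix (Fin n) (Fin n) ℂ) (hg : IsUnit g.det)
    (p : ℂ[X]) : aeval (g * N * g⁻¹) p = g * aeval N p * g⁻¹ := by
  haveI := g.invertibleOfIsUnitDet hg
  have hgi : g * g⁻¹ = 1 := mul_nonsing_inv g hg
  induction p using Polynomial.induction_on' with
  | add p q hp hq => rw [map_add, map_add, hp, hq, Matrix.mul_add, Matrix.add_mul]
  | monomial k c =>
    have hpow : ∀ m : ℕ, (g * N * g⁻¹) ^ m = g * N ^ m * g⁻¹ := by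
      intro m
      induction m with
      | zero => simp [hgi]
      | succ m ih =>
        rw [pow_succ, ih, pow_succ]
        simp [Matrix.mul_assoc, Matrix.inv_mul_cancel_left_of_invertible]
    rw [aeval_monomial, aeval_monomial, hpow]
    simp [Algebra.algebraMap_eq_smul_one, smul_mul_assoc, mul_smul_comm]

lemma sum_tail {n b : ℕ} (hb : b ≤ n) (f : Fin n → ℂ)
    (hf : ∀ u : Fin n, u.1 < n - b → f u = 0) :
    ∑ u : Fin n, f u = ∑ w : Fin b, f ⟨n - b + w.1, by omega⟩ := by
  classical
  have hinj : ∀ x ∈ (univ : Finset (Fin b)), ∀ y ∈ (univ : Finset (Fin b)),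
      (⟨n - b + x.1, by omega⟩ : Fin n) = (⟨n - b + y.1, by omega⟩ : Fin n) → x = y := by
    intro x _ y _ h
    have := Fin.mk.injEq .. ▸ h
    exact Fin.ext (by omega)
  rw [← Finset.sum_image (g := fun w : Fin b => (⟨n - b + w.1, by omega⟩ : Fin n))
    (f := f) hinj]
  refine (Finset.sum_subset (Finset.subset_univ _) ?_).symm
  intro x _ hx
  refine hf x ?_
  by_contra hc
  exact hx (Finset.mem_image.2 ⟨⟨x.1 - (n - b), by omega⟩, Finset.mem_univ _,
    Fin.ext (by simp; omega)⟩)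

lemma sum_head {n b : ℕ} (hb : b ≤ n) (f : Fin n → ℂ)
    (hf : ∀ u : Fin n, b ≤ u.1 → f u = 0) :
    ∑ u : Fin n, f u = ∑ w : Fin b, f ⟨w.1, by omega⟩ := by
  classical
  have hinj : ∀ x ∈ (univ : Finset (Fin b)), ∀ y ∈ (univ : Finset (Fin b)),
      (⟨x.1, by omega⟩ : Fin n) = (⟨y.1, by omega⟩ : Fin n) → x = y := by
    intro x _ y _ h
    exact Fin.ext (by simpa [Fin.ext_iff] using h)
  rw [← Finset.sum_image (g := fun w : Fin b => (⟨w.1, by omega⟩ : Fin n))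
    (f := f) hinj]
  refine (Finset.sum_subset (Finset.subset_univ _) ?_).symm
  intro x _ hx
  refine hf x ?_
  by_contra hc
  exact hx (Finset.mem_image.2 ⟨⟨x.1, by omega⟩, Finset.mem_univ _, Fin.ext rfl⟩)

lemma sum_sigma_single {ι : Type*} [Fintype ι] [DecidableEq ι] {κ : ι → Type*}
    [∀ i, Fintype (κ i)] (i₀ : ι) (f : (Σ i, κ i) → ℂ)
    (hf : ∀ σ : Σ i, κ i, σ.1 ≠ i₀ → f σ = 0) :
    ∑ σ : Σ i, κ i, f σ = ∑ x : κ i₀, f ⟨i₀, x⟩ := by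
  rw [← Finset.univ_sigma_univ, Finset.sum_sigma]
  exact Fintype.sum_eq_single i₀ fun i hi => Finset.sum_eq_zero fun x _ => hf ⟨i, x⟩ hi

lemma det_bd {s : ℕ} {κ : Fin s → Type*} [∀ i, Fintype (κ i)] [∀ i, DecidableEq (κ i)]
    (B : ∀ i, Matrix (κ i) (κ i) ℂ) :
    (Matrix.blockDiagonal' B).det = ∏ i, (B i).det := by
  rw [Matrix.BlockTriangular.det_fintype (Matrix.blockTriangular_blockDiagonal' B)]
  refine Finset.prod_congr rfl fun i _ => ?_
  let e : κ i ≃ {σ : Σ i, κ i // σ.1 = i} :=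
    { toFun := fun u => ⟨⟨i, u⟩, rfl⟩
      invFun := fun σ => cast (congrArg κ σ.2) σ.1.2
      left_inv := fun u => rfl
      right_inv := fun σ => by rcases σ with ⟨⟨i', u⟩, h⟩; subst h; rfl }
  rw [← Matrix.det_submatrix_equiv_self e]
  congr 1
  ext u u'
  simp only [Matrix.submatrix_apply, Matrix.toSquareBlock_def, Matrix.of_apply]
  exact Matrix.blockDiagonal'_apply_eq B i u u'

def rowIdx {n s : ℕ} (a : Fin s → ℕ) (han : ∀ i, a i ≤ n) (σ : Σ i, Fin (a i)) : Fin n :=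
  ⟨n - a σ.1 + σ.2.1, by have := σ.2.isLt; have := han σ.1; omega⟩

def colIdx {n t : ℕ} (a' : Fin t → ℕ) (ha'n : ∀ j, a' j ≤ n) (σ : Σ j, Fin (a' j)) : Fin n :=
  ⟨σ.2.1, by have := σ.2.isLt; have := ha'n σ.1; omega⟩

def Bmat (n : ℕ) {s : ℕ} (a : Fin s → ℕ) (han : ∀ i, a i ≤ n)
    (g : Matrix (Fin n) (Fin n) ℂ) (i : Fin s) : Matrix (Fin (a i)) (Fin (a i)) ℂ :=
  fun u u' => g (rowIdx a han ⟨i, u⟩) (rowIdx a han ⟨i, u'⟩)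

def Cmat (n : ℕ) {t : ℕ} (a' : Fin t → ℕ) (ha'n : ∀ j, a' j ≤ n)
    (G : Matrix (Fin n) (Fin n) ℂ) (j : Fin t) : Matrix (Fin (a' j)) (Fin (a' j)) ℂ :=
  fun v v' => G (colIdx a' ha'n ⟨j, v⟩) (colIdx a' ha'n ⟨j, v'⟩)

lemma det_factor {n s t r : ℕ} (a : Fin s → ℕ) (a' : Fin t → ℕ)
    (han : ∀ i, a i ≤ n) (ha'n : ∀ j, a' j ≤ n)
    (e : (Σ i : Fin s, Fin (a i)) ≃ Fin r) (e' : (Σ j : Fin t, Fin (a' j)) ≃ Fin r)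
    (F : Fin s → Fin t → Matrix (Fin n) (Fin n) ℂ)
    (g : Matrix (Fin n) (Fin n) ℂ) (hg : IsUnit g.det)
    (hgu : ∀ i j : Fin n, j < i → g i j = 0) :
    Matrix.det (Matrix.of fun k l : Fin r =>
      (g * F (e.symm k).1 (e'.symm l).1 * g⁻¹)
        (rowIdx a han (e.symm k)) (colIdx a' ha'n (e'.symm l))) =
    ((∏ i : Fin s, ∏ k : Fin (a i), g (rowIdx a han ⟨i, k⟩) (rowIdx a han ⟨i, k⟩)) *
     (∏ j : Fin t, ∏ k : Fin (a' j), g (colIdx a' ha'n ⟨j, k⟩) (colIdx a' ha'n ⟨j, k⟩))⁻¹) *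
    Matrix.det (Matrix.of fun k l : Fin r =>
      F (e.symm k).1 (e'.symm l).1 (rowIdx a han (e.symm k)) (colIdx a' ha'n (e'.symm l))) := by
  haveI := g.invertibleOfIsUnitDet hg
  have hBT : g.BlockTriangular id := fun i j h => hgu i j h
  have hiBT := Matrix.blockTriangular_inv_of_blockTriangular hBT
  have hgiu : ∀ i j : Fin n, j < i → g⁻¹ i j = 0 := fun i j h => hiBT h
  have hdiag : ∀ k : Fin n, g⁻¹ k k = (g k k)⁻¹ := by
    intro k
    have h1 : (g * g⁻¹) k k = 1 := by
      rw [Matrix.mul_nonsing_inv g hg]; simp [Matrix.one_apply]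
    rw [Matrix.mul_apply] at h1
    have h2 : g k k * g⁻¹ k k = 1 := by
      rw [← h1]
      refine (Fintype.sum_eq_single (f := fun v => g k v * g⁻¹ v k) k fun v hv => ?_).symm
      show g k v * g⁻¹ v k = 0
      rcases lt_or_gt_of_ne hv with h | h
      · rw [hgu k v h, zero_mul]
      · rw [hgiu v k h, mul_zero]
    exact (inv_eq_of_mul_eq_one_right h2).symm
  set L : Matrix (Fin r) (Fin r) ℂ :=
    (Matrix.blockDiagonal' (Bmat n a han g)).submatrix e.symm e.symm with hL
  set R : Matrix (Fin r) (Fin r) ℂ :=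
    (Matrix.blockDiagonal' (Cmat n a' ha'n g⁻¹)).submatrix e'.symm e'.symm with hR
  set A : Matrix (Fin r) (Fin r) ℂ := Matrix.of fun k l : Fin r =>
      F (e.symm k).1 (e'.symm l).1 (rowIdx a han (e.symm k)) (colIdx a' ha'n (e'.symm l))
    with hA
  have key : (Matrix.of fun k l : Fin r =>
      (g * F (e.symm k).1 (e'.symm l).1 * g⁻¹)
        (rowIdx a han (e.symm k)) (colIdx a' ha'n (e'.symm l))) = L * A * R := by
    ext k l
    have hrowv : ∀ u : Fin n, u.1 < n - a (e.symm k).1 → u < rowIdx a han (e.symm k) := by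
      intro u hu
      show u.1 < n - a (e.symm k).1 + ((e.symm k).2 : ℕ)
      omega
    have hS : (g * F (e.symm k).1 (e'.symm l).1 * g⁻¹)
        (rowIdx a han (e.symm k)) (colIdx a' ha'n (e'.symm l)) =
        ∑ x : Fin (a' (e'.symm l).1), (∑ w : Fin (a (e.symm k).1),
          g (rowIdx a han (e.symm k)) (rowIdx a han ⟨(e.symm k).1, w⟩) *
          F (e.symm k).1 (e'.symm l).1 (rowIdx a han ⟨(e.symm k).1, w⟩)
            (colIdx a' ha'n ⟨(e'.symm l).1, x⟩)) *
          g⁻¹ (colIdx a' ha'n ⟨(e'.symm l).1, x⟩) (colIdx a' ha'n (e'.symm l)) := by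
      rw [Matrix.mul_apply]
      calc ∑ v : Fin n, (g * F (e.symm k).1 (e'.symm l).1) (rowIdx a han (e.symm k)) v *
            g⁻¹ v (colIdx a' ha'n (e'.symm l))
          = ∑ x : Fin (a' (e'.symm l).1),
              (g * F (e.symm k).1 (e'.symm l).1) (rowIdx a han (e.symm k))
                ⟨x.1, by have := x.isLt; have := ha'n (e'.symm l).1; omega⟩ *
              g⁻¹ ⟨x.1, by have := x.isLt; have := ha'n (e'.symm l).1; omega⟩
                (colIdx a' ha'n (e'.symm l)) := by
            refine sum_head (ha'n (e'.symm l).1) _ fun v hv => ?_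
            rw [hgiu v (colIdx a' ha'n (e'.symm l))
              (by show ((e'.symm l).2 : ℕ) < v.1; have := (e'.symm l).2.isLt; omega), mul_zero]
        _ = _ := by
            refine Finset.sum_congr rfl fun x _ => ?_
            congr 1
            rw [Matrix.mul_apply]
            refine sum_tail (han (e.symm k).1) _ fun u hu => ?_
            rw [hgu (rowIdx a han (e.symm k)) u (hrowv u hu), zero_mul]
    have hT : (L * A * R) k l =
        ∑ x : Fin (a' (e'.symm l).1), (∑ w : Fin (a (e.symm k).1),
          g (rowIdx a han (e.symm k)) (rowIdx a han ⟨(e.symm k).1, w⟩) *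
          F (e.symm k).1 (e'.symm l).1 (rowIdx a han ⟨(e.symm k).1, w⟩)
            (colIdx a' ha'n ⟨(e'.symm l).1, x⟩)) *
          g⁻¹ (colIdx a' ha'n ⟨(e'.symm l).1, x⟩) (colIdx a' ha'n (e'.symm l)) := by
      rw [Matrix.mul_apply]
      have hinner : ∀ m' : Fin r, (L * A) k m' =
          ∑ w : Fin (a (e.symm k).1),
            g (rowIdx a han (e.symm k)) (rowIdx a han ⟨(e.symm k).1, w⟩) *
            A (e ⟨(e.symm k).1, w⟩) m' := by
        intro m'
        rw [Matrix.mul_apply]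
        calc ∑ m : Fin r, L k m * A m m'
            = ∑ σ : Σ i : Fin s, Fin (a i), L k (e σ) * A (e σ) m' :=
              (Equiv.sum_comp e fun m => L k m * A m m').symm
          _ = ∑ w : Fin (a (e.symm k).1),
                L k (e ⟨(e.symm k).1, w⟩) * A (e ⟨(e.symm k).1, w⟩) m' := by
              refine sum_sigma_single (e.symm k).1 _ ?_
              rintro ⟨i', w⟩ hne
              have : L k (e ⟨i', w⟩) = 0 := by
                show Matrix.blockDiagonal' (Bmat n a han g) (e.symm k) (e.symm (e ⟨i', w⟩)) = 0
                rw [Equiv.symm_apply_apply]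
                exact Matrix.blockDiagonal'_apply_ne _ _ _ fun hh => hne hh.symm
              rw [this, zero_mul]
          _ = _ := by
              refine Finset.sum_congr rfl fun w _ => ?_
              congr 1
              show Matrix.blockDiagonal' (Bmat n a han g) (e.symm k)
                (e.symm (e ⟨(e.symm k).1, w⟩)) = _
              rw [Equiv.symm_apply_apply]
              exact Matrix.blockDiagonal'_apply_eq _ _ _ _
      calc ∑ m' : Fin r, (L * A) k m' * R m' l
          = ∑ σ' : Σ j : Fin t, Fin (a' j), (L * A) k (e' σ') * R (e' σ') l :=
            (Equiv.sum_comp e' fun m' => (L * A) k m' * R m' l).symm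
        _ = ∑ x : Fin (a' (e'.symm l).1),
              (L * A) k (e' ⟨(e'.symm l).1, x⟩) * R (e' ⟨(e'.symm l).1, x⟩) l := by
            refine sum_sigma_single (e'.symm l).1 _ ?_
            rintro ⟨j', x⟩ hne
            have : R (e' ⟨j', x⟩) l = 0 := by
              show Matrix.blockDiagonal' (Cmat n a' ha'n g⁻¹) (e'.symm (e' ⟨j', x⟩)) (e'.symm l) = 0
              rw [Equiv.symm_apply_apply]
              exact Matrix.blockDiagonal'_apply_ne _ _ _ hne
            rw [this, mul_zero]
        _ = _ := by
            refine Finset.sum_congr rfl fun x _ => ?_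
            rw [hinner]
            congr 1
            · refine Finset.sum_congr rfl fun w _ => ?_
              congr 1
              show A (e ⟨(e.symm k).1, w⟩) (e' ⟨(e'.symm l).1, x⟩) = _
              show F ((e.symm (e ⟨(e.symm k).1, w⟩)).1) ((e'.symm (e' ⟨(e'.symm l).1, x⟩)).1)
                (rowIdx a han (e.symm (e ⟨(e.symm k).1, w⟩)))
                (colIdx a' ha'n (e'.symm (e' ⟨(e'.symm l).1, x⟩))) = _
              rw [Equiv.symm_apply_apply, Equiv.symm_apply_apply]
            · show Matrix.blockDiagonal' (Cmat n a' ha'n g⁻¹)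
                (e'.symm (e' ⟨(e'.symm l).1, x⟩)) (e'.symm l) = _
              rw [Equiv.symm_apply_apply]
              exact Matrix.blockDiagonal'_apply_eq _ _ _ _
    exact hS.trans hT.symm
  rw [key, Matrix.det_mul, Matrix.det_mul]
  have hdetL : L.det = ∏ i : Fin s, ∏ k : Fin (a i),
      g (rowIdx a han ⟨i, k⟩) (rowIdx a han ⟨i, k⟩) := by
    rw [hL, Matrix.det_submatrix_equiv_self, det_bd]
    refine Finset.prod_congr rfl fun i _ => ?_
    rw [Matrix.det_of_upperTriangular (M := Bmat n a han g i)
      (fun u u' h => hgu _ _ (by show n - a i + (u' : ℕ) < n - a i + (u : ℕ); have : (u' : ℕ) < u := h; omega))]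
    exact Finset.prod_congr rfl fun u _ => rfl
  have hdetR : R.det = (∏ j : Fin t, ∏ k : Fin (a' j),
      g (colIdx a' ha'n ⟨j, k⟩) (colIdx a' ha'n ⟨j, k⟩))⁻¹ := by
    rw [hR, Matrix.det_submatrix_equiv_self, det_bd]
    rw [← Finset.prod_inv_distrib]
    refine Finset.prod_congr rfl fun j _ => ?_
    rw [Matrix.det_of_upperTriangular (M := Cmat n a' ha'n g⁻¹ j)
      (fun v v' h => hgiu _ _ (by show (v' : ℕ) < (v : ℕ); exact h))]
    rw [← Finset.prod_inv_distrib]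
    refine Finset.prod_congr rfl fun x _ => ?_
    exact hdiag _
  rw [hdetL, hdetR]
  ring

/-- The `r × r` block matrix `N^P` whose `(i,j)`-block is the submatrix of
`P i j` evaluated at `N`, formed by the last `a i` rows and first `a' j` columns,
and its determinant. -/
noncomputable def blockDet (n s t r : ℕ) (a : Fin s → ℕ) (a' : Fin t → ℕ)
    (han : ∀ i, a i ≤ n) (ha'n : ∀ j, a' j ≤ n)
    (hra : ∑ i, a i = r) (hra' : ∑ j, a' j = r)
    (P : Fin s → Fin t → Polynomial ℂ)
    (N : Matrix (Fin n) (Fin n) ℂ) : ℂ :=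
  Matrix.det (Matrix.of fun k l : Fin r =>
    let p : Σ i : Fin s, Fin (a i) :=
      (Fintype.equivFinOfCardEq (by simp [hra])).symm k
    let q : Σ j : Fin t, Fin (a' j) :=
      (Fintype.equivFinOfCardEq (by simp [hra'])).symm l
    (Polynomial.aeval N (P p.1 q.1))
      ⟨n - a p.1 + p.2.1, by have := p.2.isLt; have := han p.1; omega⟩
      ⟨q.2.1, by have := q.2.isLt; have := ha'n q.1; omega⟩)

/-- each determinantal function `f^P` is a `B`-semi-invariant of the
indicated weight for the conjugation action of the Borel subgroup on the
nilpotent cone. -/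
theorem stmt_6 (n s t r : ℕ) (a : Fin s → ℕ) (a' : Fin t → ℕ)
    (hapos : ∀ i, 0 < a i) (ha'pos : ∀ j, 0 < a' j)
    (han : ∀ i, a i ≤ n) (ha'n : ∀ j, a' j ≤ n)
    (hra : ∑ i, a i = r) (hra' : ∑ j, a' j = r)
    (P : Fin s → Fin t → Polynomial ℂ)
    (N : Matrix (Fin n) (Fin n) ℂ) (hN : IsNilpotent N)
    (g : Matrix (Fin n) (Fin n) ℂ) (hg : IsUnit g.det)
    (hgu : ∀ i j : Fin n, j < i → g i j = 0) :
    blockDet n s t r a a' han ha'n hra hra' P (g * N * g⁻¹) =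
      ((∏ i : Fin s, ∏ k : Fin (a i),
          g ⟨n - a i + k.1, by have := k.isLt; have := han i; omega⟩
            ⟨n - a i + k.1, by have := k.isLt; have := han i; omega⟩) *
       (∏ j : Fin t, ∏ k : Fin (a' j),
          g ⟨k.1, by have := k.isLt; have := ha'n j; omega⟩
            ⟨k.1, by have := k.isLt; have := ha'n j; omega⟩)⁻¹) *
      blockDet n s t r a a' han ha'n hra hra' P N := by
  have hcard : Fintype.card (Σ i : Fin s, Fin (a i)) = r := by simp [hra]
  have hcard' : Fintype.card (Σ j : Fin t, Fin (a' j)) = r := by simp [hra']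
  set e : (Σ i : Fin s, Fin (a i)) ≃ Fin r := Fintype.equivFinOfCardEq hcard with he
  set e' : (Σ j : Fin t, Fin (a' j)) ≃ Fin r := Fintype.equivFinOfCardEq hcard' with he'
  have h1 : blockDet n s t r a a' han ha'n hra hra' P (g * N * g⁻¹) =
      Matrix.det (Matrix.of fun k l : Fin r =>
        (g * Polynomial.aeval N (P (e.symm k).1 (e'.symm l).1) * g⁻¹)
          (rowIdx a han (e.symm k)) (colIdx a' ha'n (e'.symm l))) := by
    refine congrArg Matrix.det (Matrix.ext fun k l => ?_)
    show Polynomial.aeval (g * N * g⁻¹) (P (e.symm k).1 (e'.symm l).1)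
        (rowIdx a han (e.symm k)) (colIdx a' ha'n (e'.symm l)) = _
    rw [aux_aeval_conj g N hg]
    rfl
  have h2 : blockDet n s t r a a' han ha'n hra hra' P N =
      Matrix.det (Matrix.of fun k l : Fin r =>
        Polynomial.aeval N (P (e.symm k).1 (e'.symm l).1)
          (rowIdx a han (e.symm k)) (colIdx a' ha'n (e'.symm l))) := rfl
  rw [h1, h2]
  exact det_factor a a' han ha'n e e' (fun i j => Polynomial.aeval N (P i j)) g hg hgu
end

section
/- Define, for 3×3 nilpotent complex matrices N: det₁(N) = N_{2,1}N_{3,2} − N_{2,2}N_{3,1}, f₁(N) = N_{2,1}·det₁(N) + N_{3,1}·(N_{2,1}N_{3,3} − N_{3,1}N_{2,3}), and f₂(N) = N_{3,2}·det₁(N) + N_{3,1}·(N_{1,1}N_{3,2} − N_{1,2}N_{3,1}). Then f₁(N)·f₂(N) = det₁(N)³ for all nilpotent N ∈ ℂ^{3×3}. -/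
/-!
Expanding the determinant, `f1 N * f2 N = det (det1 N • 1 + N₃₁ • N)` for every 3×3 matrix `N`:
both sides equal `t³ + σ₁ t² s + σ₂ t s² + σ₃ s³` with `t = det1 N`, `s = N₃₁` and `σᵢ` the
elementary symmetric functions of the eigenvalues of `N`. For nilpotent `N` the matrix `s • N` is
nilpotent, so its characteristic polynomial is `X³` and the determinant is `t³`.
-/

noncomputable def det1 (N : Matrix (Fin 3) (Fin 3) ℂ) : ℂ :=
  N 1 0 * N 2 1 - N 1 1 * N 2 0

noncomputable def f1 (N : Matrix (Fin 3) (Fin 3) ℂ) : ℂ :=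
  N 1 0 * det1 N + N 2 0 * (N 1 0 * N 2 2 - N 2 0 * N 1 2)

noncomputable def f2 (N : Matrix (Fin 3) (Fin 3) ℂ) : ℂ :=
  N 2 1 * det1 N + N 2 0 * (N 0 0 * N 2 1 - N 0 1 * N 2 0)

open Polynomial in
theorem Matrix.charpoly_eq_X_pow_of_isNilpotent {n R : Type*} [Fintype n] [DecidableEq n]
    [CommRing R] [IsReduced R] {M : Matrix n n R} (hM : IsNilpotent M) :
    M.charpoly = X ^ Fintype.card n := by
  rw [← sub_eq_zero]
  ext i
  exact (Polynomial.isNilpotent_iff.mp (isNilpotent_charpoly_sub_pow_of_isNilpotent hM) i).eq_zero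

open Polynomial in
theorem Matrix.det_scalar_add_of_isNilpotent {n R : Type*} [Fintype n] [DecidableEq n]
    [CommRing R] [IsReduced R] (t : R) {M : Matrix n n R} (hM : IsNilpotent M) :
    (scalar n t + M).det = t ^ Fintype.card n := by
  have h := eval_charpoly (-M) t
  rwa [charpoly_eq_X_pow_of_isNilpotent hM.neg, eval_pow, eval_X, sub_neg_eq_add, eq_comm] at h

theorem f1_mul_f2_eq_det (N : Matrix (Fin 3) (Fin 3) ℂ) :
    f1 N * f2 N = (Matrix.scalar (Fin 3) (det1 N) + N 2 0 • N).det := by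
  simp only [f1, f2, det1, Matrix.det_fin_three, Matrix.add_apply, Matrix.smul_apply, smul_eq_mul,
    Matrix.scalar_apply, Matrix.diagonal_apply_eq, ne_eq, Fin.reduceEq, not_false_eq_true,
    Matrix.diagonal_apply_ne, zero_add]
  ring

/-- the relation f₁·f₂ = det₁³ on the 3×3 nilpotent cone. -/
theorem stmt_10 (N : Matrix (Fin 3) (Fin 3) ℂ) (hN : N ^ 3 = 0) :
    f1 N * f2 N = (det1 N) ^ 3 := by
  have hsN : IsNilpotent (N 2 0 • N) := ⟨3, by rw [smul_pow, hN, smul_zero]⟩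
  rw [f1_mul_f2_eq_det, Matrix.det_scalar_add_of_isNilpotent _ hsN, Fintype.card_fin]
end

section
/- The functions f_{3,1}(N) = N_{3,1}, det₁(N) = N_{2,1}N_{3,2} − N_{2,2}N_{3,1}, f₁(N) = N_{2,1}·det₁(N) + N_{3,1}·(N_{2,1}N_{3,3} − N_{3,1}N_{2,3}), and f₂(N) = N_{3,2}·det₁(N) + N_{3,1}·(N_{1,1}N_{3,2} − N_{1,2}N_{3,1}) on 3×3 nilpotent complex matrices are each invariant under conjugation by upper triangular unipotent matrices: f(uNu^{-1}) = f(N) for all u ∈ U. -/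
noncomputable def f31 (N : Matrix (Fin 3) (Fin 3) ℂ) : ℂ := N 2 0

/-- f_{3,1}, det₁, f₁ and f₂ are invariant under conjugation by
upper triangular unipotent matrices. -/
theorem stmt_11 (N u : Matrix (Fin 3) (Fin 3) ℂ) (hN : N ^ 3 = 0)
    (hdiag : ∀ i : Fin 3, u i i = 1)
    (hlow : ∀ i j : Fin 3, j < i → u i j = 0) :
    f31 (u * N * u⁻¹) = f31 N ∧
    det1 (u * N * u⁻¹) = det1 N ∧
    f1 (u * N * u⁻¹) = f1 N ∧
    f2 (u * N * u⁻¹) = f2 N := by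
  have h10 : u 1 0 = 0 := hlow 1 0 (by decide)
  have h20 : u 2 0 = 0 := hlow 2 0 (by decide)
  have h21 : u 2 1 = 0 := hlow 2 1 (by decide)
  have h00 := hdiag 0
  have h11 := hdiag 1
  have h22 := hdiag 2
  set v : Matrix (Fin 3) (Fin 3) ℂ :=
    !![1, -u 0 1, u 0 1 * u 1 2 - u 0 2; 0, 1, -u 1 2; 0, 0, 1] with hv
  have v00 : v 0 0 = 1 := rfl
  have v01 : v 0 1 = -u 0 1 := rfl
  have v02 : v 0 2 = u 0 1 * u 1 2 - u 0 2 := rfl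
  have v10 : v 1 0 = 0 := rfl
  have v11 : v 1 1 = 1 := rfl
  have v12 : v 1 2 = -u 1 2 := rfl
  have v20 : v 2 0 = 0 := rfl
  have v21 : v 2 1 = 0 := rfl
  have v22 : v 2 2 = 1 := rfl
  clear hv
  have m0 : (⟨0, by omega⟩ : Fin 3) = 0 := rfl
  have m1 : (⟨1, by omega⟩ : Fin 3) = 1 := rfl
  have m2 : (⟨2, by omega⟩ : Fin 3) = 2 := rfl
  have huv : u * v = 1 := by
    ext i j
    rw [Matrix.mul_apply, Fin.sum_univ_three]
    fin_cases i <;> fin_cases j <;>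
      (try simp only [v00, v01, v02, v10, v11, v12, v20, v21, v22, h10, h20, h21, h00, h11, h22,
        m0, m1, m2, Matrix.one_apply]) <;>
      first
      | ring1
      | (simp; ring1)
      | simp
  have hinv : u⁻¹ = v := Matrix.inv_eq_right_inv huv
  rw [hinv]
  refine ⟨?_, ?_, ?_, ?_⟩ <;>
    simp only [f31, det1, f1, f2, Matrix.mul_apply, Fin.sum_univ_three,
      v00, v01, v02, v10, v11, v12, v20, v21, v22, h10, h20, h21, h00, h11, h22] <;> ring
end

section
/- The map μ from the nilpotent cone of 3×3 complex matrices to ℂ⁴, N ↦ (f_{3,1}(N), f₁(N), f₂(N), det₁(N)) (with f_{3,1}, f₁, f₂, det₁ as defined from matrix entries), has image contained in the variety {(s, t, u, v) ∈ ℂ⁴ : t·u = v³}, and the restriction of μ to the set of N with N_{2,1} ≠ 0 and N_{3,2} ≠ 0 is surjective onto {(s,t,u,v) : tu = v³, t ≠ 0, u ≠ 0}. -/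
/-!
On the nilpotent cone the invariants `tr N`, `tr N²` and `det N` vanish, and `f₁ f₂ - det₁³`
lies in the ideal they generate, which gives the first claim. For surjectivity, the strictly
lower triangular matrix with subdiagonal `(a, b)` and corner `s` has `det₁ = ab`, `f₁ = a²b`,
`f₂ = ab²`; since `tu = v³` with `t, u ≠ 0` forces `v ≠ 0`, the choice `a = t/v`, `b = u/v`
works.
-/

namespace Matrix

variable {n R : Type*} [Fintype n] [DecidableEq n] [CommRing R] [IsReduced R]

theorem trace_pow_eq_zero_of_isNilpotent {N : Matrix n n R} (hN : IsNilpotent N) {k : ℕ}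
    (hk : k ≠ 0) : (N ^ k).trace = 0 :=
  (isNilpotent_trace_of_isNilpotent (hN.pow_of_pos hk)).eq_zero

theorem det_eq_zero_of_isNilpotent [Nonempty n] {N : Matrix n n R} (hN : IsNilpotent N) :
    N.det = 0 := by
  obtain ⟨k, hk⟩ := hN
  exact IsNilpotent.eq_zero ⟨k, by rw [← det_pow, hk, det_zero]⟩

end Matrix

theorem f1_mul_f2_eq_det1_pow_three {N : Matrix (Fin 3) (Fin 3) ℂ} (htr : N.trace = 0)
    (htr_sq : (N ^ 2).trace = 0) (hdet : N.det = 0) : f1 N * f2 N = det1 N ^ 3 := by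
  rw [Matrix.trace_fin_three] at htr
  simp only [sq, Matrix.trace_fin_three, Matrix.mul_apply, Fin.sum_univ_three] at htr_sq
  rw [Matrix.det_fin_three] at hdet
  simp only [f1, f2, det1]
  linear_combination
    ((-1/2 : ℂ) * N 1 1 * N 2 0 * N 2 0 * N 2 0 * N 2 2
      + (1/2 : ℂ) * N 1 1 * N 1 1 * N 2 0 * N 2 0 * N 2 0
      + (1/2 : ℂ) * N 1 0 * N 2 0 * N 2 0 * N 2 1 * N 2 2
      + (-3/2 : ℂ) * N 1 0 * N 1 1 * N 2 0 * N 2 0 * N 2 1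
      + N 1 0 * N 1 0 * N 2 0 * N 2 1 * N 2 1
      + (-1/2 : ℂ) * N 0 0 * N 1 1 * N 2 0 * N 2 0 * N 2 0
      + (1/2 : ℂ) * N 0 0 * N 1 0 * N 2 0 * N 2 0 * N 2 1) * htr
    + ((1/2 : ℂ) * N 1 1 * N 2 0 * N 2 0 * N 2 0
      + (-1/2 : ℂ) * N 1 0 * N 2 0 * N 2 0 * N 2 1) * htr_sq
    + (N 2 0 * N 2 0 * N 2 0) * hdet

theorem f1_mul_f2_eq_det1_pow_three_of_isNilpotent {N : Matrix (Fin 3) (Fin 3) ℂ}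
    (hN : IsNilpotent N) : f1 N * f2 N = det1 N ^ 3 :=
  f1_mul_f2_eq_det1_pow_three
    (by simpa using Matrix.trace_pow_eq_zero_of_isNilpotent hN one_ne_zero)
    (Matrix.trace_pow_eq_zero_of_isNilpotent hN two_ne_zero)
    (Matrix.det_eq_zero_of_isNilpotent hN)

section LowerTriangular

variable (a b s : ℂ)

theorem lowerTriangular_pow_three : !![0, 0, 0; a, 0, 0; s, b, 0] ^ 3 = 0 := by
  ext i j
  fin_cases i <;> fin_cases j <;> simp [pow_succ, Matrix.mul_apply, Fin.sum_univ_three]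

theorem f31_lowerTriangular : f31 !![0, 0, 0; a, 0, 0; s, b, 0] = s := rfl

theorem det1_lowerTriangular : det1 !![0, 0, 0; a, 0, 0; s, b, 0] = a * b := by
  simp [det1]

theorem f1_lowerTriangular : f1 !![0, 0, 0; a, 0, 0; s, b, 0] = a ^ 2 * b := by
  simp [f1, det1, sq, mul_assoc]

theorem f2_lowerTriangular : f2 !![0, 0, 0; a, 0, 0; s, b, 0] = a * b ^ 2 := by
  simp [f2, det1, sq, mul_left_comm]

end LowerTriangular

/-- the image of μ = (f_{3,1}, f₁, f₂, det₁) lies in the variety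
{t·u = v³}, and the restriction of μ to matrices with nonzero subdiagonal is
surjective onto the locus t ≠ 0, u ≠ 0 of that variety. -/
theorem stmt_12 :
    (∀ N : Matrix (Fin 3) (Fin 3) ℂ, N ^ 3 = 0 →
      f1 N * f2 N = (det1 N) ^ 3) ∧
    (∀ s t u v : ℂ, t * u = v ^ 3 → t ≠ 0 → u ≠ 0 →
      ∃ N : Matrix (Fin 3) (Fin 3) ℂ, N ^ 3 = 0 ∧ N 1 0 ≠ 0 ∧ N 2 1 ≠ 0 ∧
        f31 N = s ∧ f1 N = t ∧ f2 N = u ∧ det1 N = v) := by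
  refine ⟨fun N hN => f1_mul_f2_eq_det1_pow_three_of_isNilpotent ⟨3, hN⟩,
    fun s t u v htu ht hu => ?_⟩
  have hv : v ≠ 0 := by
    rintro rfl
    simp_all
  have hdet : t / v * (u / v) = v := by
    field_simp
    linear_combination htu
  refine ⟨!![0, 0, 0; t / v, 0, 0; s, u / v, 0], lowerTriangular_pow_three _ _ _,
    div_ne_zero ht hv, div_ne_zero hu hv, f31_lowerTriangular _ _ _, ?_, ?_, ?_⟩
  · rw [f1_lowerTriangular, sq, mul_assoc, hdet, div_mul_cancel₀ t hv]
  · rw [f2_lowerTriangular, sq, ← mul_assoc, hdet, mul_div_cancel₀ u hv]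
  · rw [det1_lowerTriangular, hdet]
end

section
/- Two 3×3 nilpotent complex matrices N, N' that are both of the strictly-lower-triangular form with nonzero subdiagonal entries (N_{i,j} = 0 for i ≤ j, N_{2,1} ≠ 0, N_{3,2} ≠ 0, and likewise for N') are conjugate under the 3×3 upper unitriangular group if and only if N_{2,1} = N'_{2,1}, N_{3,2} = N'_{3,2}, and N_{3,1} = N'_{3,1}; i.e. if and only if N = N'. -/
/-- two strictly lower triangular 3×3 matrices with nonzero
subdiagonal entries are conjugate under the unitriangular group iff they are equal. -/
theorem stmt_13 (N N' : Matrix (Fin 3) (Fin 3) ℂ)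
    (hN0 : ∀ i j : Fin 3, i ≤ j → N i j = 0)
    (hN1 : N 1 0 ≠ 0) (hN2 : N 2 1 ≠ 0)
    (hN'0 : ∀ i j : Fin 3, i ≤ j → N' i j = 0)
    (hN'1 : N' 1 0 ≠ 0) (hN'2 : N' 2 1 ≠ 0) :
    (∃ u : Matrix (Fin 3) (Fin 3) ℂ,
        (∀ i : Fin 3, u i i = 1) ∧ (∀ i j : Fin 3, j < i → u i j = 0) ∧
        u * N * u⁻¹ = N') ↔
      N 1 0 = N' 1 0 ∧ N 2 1 = N' 2 1 ∧ N 2 0 = N' 2 0 := by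
  constructor
  · rintro ⟨u, hdiag, hlow, h⟩
    have h10 : u 1 0 = 0 := hlow 1 0 (by decide)
    have h20 : u 2 0 = 0 := hlow 2 0 (by decide)
    have h21 : u 2 1 = 0 := hlow 2 1 (by decide)
    have hd0 := hdiag 0
    have hd1 := hdiag 1
    have hd2 := hdiag 2
    have hdet : u.det = 1 := by
      rw [Matrix.det_fin_three, h10, h20, h21, hd0, hd1, hd2]; ring
    have hunit : IsUnit u.det := hdet ▸ isUnit_one
    have key : u * N = N' * u := by
      calc u * N = u * N * (u⁻¹ * u) := by rw [Matrix.nonsing_inv_mul u hunit, mul_one]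
      _ = (u * N * u⁻¹) * u := (mul_assoc (u*N) u⁻¹ u).symm
      _ = N' * u := by rw [h]
    have e : ∀ i j, (u * N) i j = (N' * u) i j := fun i j => by rw [key]
    have e01 := e 0 1
    have e00 := e 0 0
    have e22 := e 2 2
    simp only [Matrix.mul_apply, Fin.sum_univ_three, h10, h20, h21, hd0, hd1, hd2,
      hN0 0 0 (le_refl _), hN0 0 1 (by decide), hN0 0 2 (by decide),
      hN0 1 1 (le_refl _), hN0 1 2 (by decide), hN0 2 2 (le_refl _),
      hN'0 0 0 (le_refl _), hN'0 0 1 (by decide), hN'0 0 2 (by decide),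
      hN'0 1 1 (le_refl _), hN'0 1 2 (by decide), hN'0 2 2 (le_refl _)] at e01 e00 e22
    -- e01 : u 0 2 * N 2 1 = 0 (up to arithmetic), hence u 0 2 = 0
    have hu02 : u 0 2 = 0 := by
      have : u 0 2 * N 2 1 = 0 := by linear_combination e01
      rcases mul_eq_zero.mp this with h' | h'
      · exact h'
      · exact absurd h' hN2
    have hu01 : u 0 1 = 0 := by
      have : u 0 1 * N 1 0 = 0 := by rw [hu02] at e00; linear_combination e00
      rcases mul_eq_zero.mp this with h' | h'
      · exact h'
      · exact absurd h' hN1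
    have hu12 : u 1 2 = 0 := by
      have : N' 2 1 * u 1 2 = 0 := by rw [hu02] at e22; linear_combination -e22
      rcases mul_eq_zero.mp this with h' | h'
      · exact absurd h' hN'2
      · exact h'
    have hu : u = 1 := by
      ext i j
      fin_cases i <;> fin_cases j <;>
        simp [hu01, hu02, hu12, h10, h20, h21, hd0, hd1, hd2, Matrix.one_apply]
    have hNN : N = N' := by
      rw [hu, one_mul, inv_one, mul_one] at h
      exact h
    exact ⟨by rw [hNN], by rw [hNN], by rw [hNN]⟩
  · rintro ⟨e1, e2, e3⟩
    have hNN : N = N' := by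
      ext i j
      fin_cases i <;> fin_cases j
      · exact (hN0 0 0 (le_refl _)).trans (hN'0 0 0 (le_refl _)).symm
      · exact (hN0 0 1 (by decide)).trans (hN'0 0 1 (by decide)).symm
      · exact (hN0 0 2 (by decide)).trans (hN'0 0 2 (by decide)).symm
      · exact e1
      · exact (hN0 1 1 (le_refl _)).trans (hN'0 1 1 (le_refl _)).symm
      · exact (hN0 1 2 (by decide)).trans (hN'0 1 2 (by decide)).symm
      · exact e3
      · exact e2
      · exact (hN0 2 2 (le_refl _)).trans (hN'0 2 2 (le_refl _)).symm
    exact ⟨1, fun i => by simp [Matrix.one_apply], fun i j hij => by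
      simp [Matrix.one_apply, (ne_of_lt hij).symm], by
      rw [one_mul, inv_one, mul_one, hNN]⟩
end

section
/- For 3×3 nilpotent complex matrices and any b in the Borel subgroup B of invertible upper triangular matrices: det₁(bNb^{-1}) = (b_{3,3}/b_{1,1})·det₁(N), where det₁(N) = N_{2,1}N_{3,2} − N_{2,2}N_{3,1}. -/
/-- det₁ is a B-semi-invariant of weight g_{3,3}/g_{1,1} on the
3×3 nilpotent cone. -/
theorem stmt_18 (N b : Matrix (Fin 3) (Fin 3) ℂ) (hN : N ^ 3 = 0)
    (hb : IsUnit b.det) (hbu : ∀ i j : Fin 3, j < i → b i j = 0) :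
    (b * N * b⁻¹) 1 0 * (b * N * b⁻¹) 2 1 - (b * N * b⁻¹) 1 1 * (b * N * b⁻¹) 2 0 =
      (b 2 2 / b 0 0) * (N 1 0 * N 2 1 - N 1 1 * N 2 0) := by
  have h10 : b 1 0 = 0 := hbu 1 0 (by decide)
  have h20 : b 2 0 = 0 := hbu 2 0 (by decide)
  have h21 : b 2 1 = 0 := hbu 2 1 (by decide)
  have hdet : b.det = b 0 0 * b 1 1 * b 2 2 := by
    rw [Matrix.det_fin_three, h10, h20, h21]; ring
  have hne : b 0 0 * b 1 1 * b 2 2 ≠ 0 := by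
    rw [← hdet]; exact hb.ne_zero
  have h0 : b 0 0 ≠ 0 := fun h => hne (by rw [h]; ring)
  have h1 : b 1 1 ≠ 0 := fun h => hne (by rw [h]; ring)
  have h2 : b 2 2 ≠ 0 := fun h => hne (by rw [h]; ring)
  rw [Matrix.inv_def]
  simp only [Matrix.mul_apply, Fin.sum_univ_three, Matrix.smul_apply,
    Matrix.adjugate_fin_three, Matrix.of_apply, Matrix.cons_val', Matrix.cons_val_zero,
    Matrix.cons_val_one, Matrix.head_cons, Matrix.empty_val', Matrix.cons_val_fin_one,
    Matrix.head_fin_const, Matrix.cons_val_two, Matrix.tail_cons, smul_eq_mul,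
    Ring.inverse_eq_inv', hdet, h10, h20, h21]
  field_simp
  ring
end
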